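/- arXiv:1912.04731 — 9 statements merged into one kernel-verified Lean document; each statement's English description precedes it below -/
import Mathlib

section
/- Universal property of (ω, F): if E is a coarse structure on ω in which every bounded set is finite, then every injective map f : (ω, E) → (ω, F) is macro-uniform (bornologous). -/
open Set Pointwise Filter Topology

/-- Ball of radius `E` around `x`. -/
def cball {X : Type*} (E : Set (X × X)) (x : X) : Set X := {y | (x, y) ∈ E}

/-- Ball of radius `E` around a set `A`. -/
def cballSet {X : Type*} (E : Set (X × X)) (A : Set X) : Set X := ⋃ a ∈ A, cball E a

/-- The condition on `φ : ω → [ω]^{<ω}` defining the family `Φ`. -/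
def IsPhi (φ : ℕ → Finset ℕ) : Prop := (∀ n, n ∈ φ n) ∧ ∀ n, {m | n ∈ φ m}.Finite

/-- The coarse structure `F` on `ω`. -/
def Ffam : Set (Set (ℕ × ℕ)) :=
  {E | ∃ φ : ℕ → Finset ℕ, IsPhi φ ∧ E ⊆ {p : ℕ × ℕ | p.2 ∈ φ p.1}}

/-- A coarse structure on a set `X`. -/
structure CoarseStructure (X : Type*) where
  sets : Set (Set (X × X))
  diag_mem : {p : X × X | p.1 = p.2} ∈ sets
  subset_mem : ∀ {E E' : Set (X × X)}, E ∈ sets → E' ⊆ E → E' ∈ sets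
  union_mem : ∀ {E E' : Set (X × X)}, E ∈ sets → E' ∈ sets → E ∪ E' ∈ sets
  inv_mem : ∀ {E : Set (X × X)}, E ∈ sets → {p : X × X | (p.2, p.1) ∈ E} ∈ sets
  comp_mem : ∀ {E E' : Set (X × X)}, E ∈ sets → E' ∈ sets →
    {p : X × X | ∃ z, (p.1, z) ∈ E ∧ (z, p.2) ∈ E'} ∈ sets

/-- A map between coarse spaces (given by families of entourages) is macro-uniform. -/
def MacroUniform {X Y : Type*} (CX : Set (Set (X × X))) (CY : Set (Set (Y × Y)))
    (f : X → Y) : Prop :=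
  ∀ E ∈ CX, ∃ E' ∈ CY, ∀ x, f '' cball E x ⊆ cball E' (f x)

/-! The witness entourage is the image of `E` under `f × f`: as `f` is injective, its balls and
inverse balls are images of the finite `E`- and `E⁻¹`-balls, and a relation on `ω` with finite
balls and finite inverse balls lies in `F` (take `φ n` to be its ball around `n` together with
`n`). -/

section Image

variable {X Y : Type*} (f : X → Y) (E : Set (X × X))

theorem image_cball_subset_cball_image_prodMap (x : X) :
    f '' cball E x ⊆ cball (Prod.map f f '' E) (f x) := by
  rintro _ ⟨z, hz, rfl⟩
  exact ⟨(x, z), hz, rfl⟩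

theorem cball_image_prodMap_subset (y : Y) :
    cball (Prod.map f f '' E) y ⊆ f '' ⋃ x ∈ f ⁻¹' {y}, cball E x := by
  rintro w ⟨⟨x, z⟩, hxz, hxy⟩
  obtain ⟨rfl, rfl⟩ := Prod.ext_iff.1 hxy
  exact ⟨z, mem_biUnion (x := x) rfl hxz, rfl⟩

theorem cball_image_prodMap_finite (hf : ∀ y, (f ⁻¹' {y}).Finite)
    (hE : ∀ x, (cball E x).Finite) (y : Y) : (cball (Prod.map f f '' E) y).Finite :=
  (((hf y).biUnion fun x _ => hE x).image f).subset (cball_image_prodMap_subset f E y)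

theorem swap_image_prodMap :
    {p : Y × Y | (p.2, p.1) ∈ Prod.map f f '' E} = Prod.map f f '' {p | (p.2, p.1) ∈ E} := by
  ext ⟨a, b⟩
  simp only [mem_ofPred_eq, mem_image, Prod.exists, Prod.map_apply, Prod.mk.injEq]
  exact ⟨fun ⟨x, z, h, hx, hz⟩ => ⟨z, x, h, hz, hx⟩, fun ⟨x, z, h, hx, hz⟩ => ⟨z, x, h, hz, hx⟩⟩

end Image

theorem mem_Ffam_of_finite_cball (E : Set (ℕ × ℕ)) (hE : ∀ n, (cball E n).Finite)
    (hE' : ∀ n, (cball {p : ℕ × ℕ | (p.2, p.1) ∈ E} n).Finite) : E ∈ Ffam := by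
  classical
  refine ⟨fun n => ((hE n).insert n).toFinset, ⟨fun n => by simp, fun n => ?_⟩, ?_⟩
  · refine ((hE' n).insert n).subset fun m hm => ?_
    simp only [mem_ofPred_eq, Finite.mem_toFinset, mem_insert_iff] at hm
    rcases hm with rfl | hm
    exacts [mem_insert _ _, Or.inr hm]
  · intro p hp
    simp only [mem_ofPred_eq, Finite.mem_toFinset]
    exact mem_insert_of_mem _ hp

/-- universal property of `(ω, F)`. -/
theorem Ffam_universal (C : CoarseStructure ℕ)
    (hb : ∀ B : Set ℕ, (∃ E ∈ C.sets, ∃ x : ℕ, B ⊆ cball E x) → B.Finite)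
    (f : ℕ → ℕ) (hf : Function.Injective f) :
    MacroUniform C.sets Ffam f := by
  have hfib : ∀ n, (f ⁻¹' {n}).Finite := fun n => (finite_singleton n).preimage hf.injOn
  have hball : ∀ E ∈ C.sets, ∀ x, (cball E x).Finite := fun E hE x =>
    hb _ ⟨E, hE, x, subset_rfl⟩
  intro E hE
  refine ⟨Prod.map f f '' E, mem_Ffam_of_finite_cball _ ?_ ?_,
    image_cball_subset_cball_image_prodMap f E⟩
  · exact cball_image_prodMap_finite f E hfib (hball E hE)
  · rw [swap_image_prodMap]
    exact cball_image_prodMap_finite f _ hfib (hball _ (C.inv_mem hE))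
end

section
/- The asymptotic dimension of the coarse space (ω, F) equals 1. -/
open Set Pointwise Filter Topology

/-- A family of sets is `H`-bounded. -/
def IsBoundedFam {X : Type*} (H : Set (X × X)) (M : Set (Set X)) : Prop :=
  ∀ A ∈ M, ∃ x, A ⊆ cball H x

/-- A family of sets is `E`-disjoint. -/
def IsDisjFam {X : Type*} (E : Set (X × X)) (M : Set (Set X)) : Prop :=
  ∀ A ∈ M, ∀ B ∈ M, A ≠ B → cballSet E A ∩ B = ∅

/-- `asdim (X, C) ≤ n`. -/
def AsdimLE {X : Type*} (C : Set (Set (X × X))) (n : ℕ) : Prop :=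
  ∀ E ∈ C, ∃ H ∈ C, ∃ M : Fin (n + 1) → Set (Set X),
    ⋃₀ (⋃ i, M i) = univ ∧ (∀ i, IsBoundedFam H (M i)) ∧ ∀ i, IsDisjFam E (M i)

/-!
An entourage `E ∈ F` joins only finitely many points to an initial segment `[0, t)`, so there is
`g t > t` such that `E` joins no point below `t` to a point at or above `g t`. Cutting `ω` at
`0 < g 0 < g (g 0) < ⋯` gives blocks such that `E` only joins neighbouring blocks: the even
blocks and the odd blocks are two `E`-disjoint families, uniformly bounded by
`{(m, k) | m ≤ k < g m} ∈ F`.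

Conversely, a single `E`-disjoint cover is closed under `E`. For `E = {(m, m), (m, m + 1)}` its
member containing `0` is all of `ω`, which is bounded by no entourage of `F`, since those have
finite balls.
-/

lemma IsDisjFam.cball_subset {X : Type*} {E : Set (X × X)} {M : Set (Set X)}
    (hM : IsDisjFam E M) (hcov : ⋃₀ M = univ) {A : Set X} (hA : A ∈ M) {a : X} (ha : a ∈ A) :
    cball E a ⊆ A := by
  intro y hy
  obtain ⟨B, hB, hyB⟩ := mem_sUnion.1 (hcov ▸ mem_univ y : y ∈ ⋃₀ M)
  by_contra hyA
  have hAB : A ≠ B := fun h => hyA (h ▸ hyB)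
  exact eq_empty_iff_forall_notMem.1 (hM A hA B hB hAB) y ⟨mem_iUnion₂.2 ⟨a, ha, hy⟩, hyB⟩

lemma not_asdimLE_zero_of_finite_cball {C : Set (Set (ℕ × ℕ))} {E : Set (ℕ × ℕ)} (hE : E ∈ C)
    (hsucc : ∀ m, (m, m + 1) ∈ E) (hfin : ∀ H ∈ C, ∀ x, (cball H x).Finite) :
    ¬ AsdimLE C 0 := by
  intro h
  obtain ⟨H, hH, M, hcov, hbdd, hdisj⟩ := h E hE
  have hcov₀ : ⋃₀ M 0 = univ := iSup_unique (ι := Fin 1) M ▸ hcov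
  obtain ⟨A, hA, h0A⟩ := mem_sUnion.1 (hcov₀ ▸ mem_univ 0 : 0 ∈ ⋃₀ M 0)
  have hA_univ : ∀ m, m ∈ A :=
    Nat.rec h0A fun m hm => (hdisj 0).cball_subset hcov₀ hA hm (hsucc m)
  obtain ⟨x, hx⟩ := hbdd 0 A hA
  exact infinite_univ ((hfin H hH x).subset fun m _ => hx (hA_univ m))

def icoEntourage (g : ℕ → ℕ) : Set (ℕ × ℕ) := {p | p.2 ∈ Ico p.1 (g p.1)}

def iterateBlock (g : ℕ → ℕ) (i : ℕ) : Set ℕ := Ico (g^[i] 0) (g^[i + 1] 0)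

def parityIterateBlocks (g : ℕ → ℕ) (k : ℕ) : Set (Set ℕ) :=
  {A | ∃ i, i % 2 = k ∧ A = iterateBlock g i}

lemma strictMono_iterate_apply_zero {g : ℕ → ℕ} (hg : ∀ t, t < g t) :
    StrictMono fun i => g^[i] 0 :=
  strictMono_nat_of_lt_succ fun i => by rw [Function.iterate_succ_apply']; exact hg _

lemma exists_mem_iterateBlock {g : ℕ → ℕ} (hg : ∀ t, t < g t) (m : ℕ) :
    ∃ i, m ∈ iterateBlock g i := by
  have hex : ∃ i, m < g^[i] 0 := ⟨m + 1, (strictMono_iterate_apply_zero hg).id_le (m + 1)⟩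
  obtain ⟨i, hi⟩ : ∃ i, Nat.find hex = i + 1 :=
    Nat.exists_eq_succ_of_ne_zero fun h => by simpa [h] using Nat.find_spec hex
  exact ⟨i, not_lt.1 (Nat.find_min hex (by omega)), hi ▸ Nat.find_spec hex⟩

lemma iterateBlock_subset_cball (g : ℕ → ℕ) (i : ℕ) :
    iterateBlock g i ⊆ cball (icoEntourage g) (g^[i] 0) :=
  fun y hy => by rwa [iterateBlock, Function.iterate_succ_apply'] at hy

lemma index_le_succ_of_mem_iterateBlock {E : Set (ℕ × ℕ)} {g : ℕ → ℕ} (hg : ∀ t, t < g t)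
    (hgE : ∀ t a b, (a, b) ∈ E → (a < t ∨ b < t) → a < g t ∧ b < g t)
    {a b i j : ℕ} (hab : (a, b) ∈ E) (ha : a ∈ iterateBlock g i) (hb : b ∈ iterateBlock g j) :
    i ≤ j + 1 ∧ j ≤ i + 1 := by
  have hb_lt := (hgE _ a b hab (Or.inl ha.2)).2
  have ha_lt := (hgE _ a b hab (Or.inr hb.2)).1
  rw [← Function.iterate_succ_apply' g] at hb_lt ha_lt
  have hmono := strictMono_iterate_apply_zero hg
  have hij := hmono.lt_iff_lt.1 (ha.1.trans_lt ha_lt)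
  have hji := hmono.lt_iff_lt.1 (hb.1.trans_lt hb_lt)
  omega

lemma isDisjFam_parityIterateBlocks {E : Set (ℕ × ℕ)} {g : ℕ → ℕ} (hg : ∀ t, t < g t)
    (hgE : ∀ t a b, (a, b) ∈ E → (a < t ∨ b < t) → a < g t ∧ b < g t) (k : ℕ) :
    IsDisjFam E (parityIterateBlocks g k) := by
  rintro _ ⟨i, rfl, rfl⟩ _ ⟨j, hj, rfl⟩ hne
  refine eq_empty_iff_forall_notMem.2 fun b ⟨hb', hb⟩ => ?_
  obtain ⟨a, ha, hab⟩ := mem_iUnion₂.1 hb'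
  have hij : i ≠ j := by rintro rfl; exact hne rfl
  have := index_le_succ_of_mem_iterateBlock hg hgE hab ha hb
  omega

namespace Ffam

lemma finite_cball {E : Set (ℕ × ℕ)} (hE : E ∈ Ffam) (x : ℕ) : (cball E x).Finite := by
  obtain ⟨φ, -, hEφ⟩ := hE
  exact (φ x).finite_toSet.subset fun y hy => hEφ hy

lemma exists_bound {E : Set (ℕ × ℕ)} (hE : E ∈ Ffam) (t : ℕ) :
    ∃ N, t < N ∧ ∀ a b, (a, b) ∈ E → (a < t ∨ b < t) → a < N ∧ b < N := by
  obtain ⟨φ, ⟨hrefl, hfin⟩, hEφ⟩ := hE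
  -- `c ∈ φ c` puts `[0, t)` itself inside `S`
  set S : Set ℕ := insert t (⋃ c ∈ Iio t, ((φ c : Set ℕ) ∪ {m | c ∈ φ m}))
  have hS : S.Finite :=
    ((finite_Iio t).biUnion fun c _ => (φ c).finite_toSet.union (hfin c)).insert t
  obtain ⟨N, hN⟩ := hS.bddAbove
  have hlt : ∀ {c}, c ∈ S → c < N + 1 := fun hc => Nat.lt_succ_of_le (hN hc)
  have hS_mem : ∀ {c m}, c < t → m ∈ φ c ∨ c ∈ φ m → m ∈ S :=
    fun hc hm => mem_insert_of_mem _ (mem_biUnion hc hm)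
  refine ⟨N + 1, hlt (mem_insert t _), fun a b hab hat => ?_⟩
  rcases hat with hat | hbt
  · exact ⟨hlt (hS_mem hat (.inl (hrefl a))), hlt (hS_mem hat (.inl (hEφ hab)))⟩
  · exact ⟨hlt (hS_mem hbt (.inr (hEφ hab))), hlt (hS_mem hbt (.inl (hrefl b)))⟩

lemma icoEntourage_mem {g : ℕ → ℕ} (hg : ∀ t, t < g t) : icoEntourage g ∈ Ffam :=
  ⟨fun m => Finset.Ico m (g m),
    ⟨fun m => Finset.mem_Ico.2 ⟨le_rfl, hg m⟩,
      fun n => (finite_Iic n).subset fun _ hm => mem_Iic.2 (Finset.mem_Ico.1 hm).1⟩,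
    fun _ hp => Finset.mem_Ico.2 hp⟩

lemma succEntourage_mem : {p : ℕ × ℕ | p.2 ∈ ({p.1, p.1 + 1} : Finset ℕ)} ∈ Ffam := by
  refine ⟨fun m => {m, m + 1}, ⟨fun m => by simp, fun n => (finite_Iic n).subset ?_⟩, subset_rfl⟩
  intro m (hm : n ∈ ({m, m + 1} : Finset ℕ))
  simp only [Finset.mem_insert, Finset.mem_singleton] at hm
  exact mem_Iic.2 (by omega)

theorem asdimLE_one : AsdimLE Ffam 1 := by
  intro E hE
  choose g hg hgE using exists_bound hE
  refine ⟨icoEntourage g, icoEntourage_mem hg, fun k => parityIterateBlocks g k, ?_, ?_,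
    fun k => isDisjFam_parityIterateBlocks hg hgE k⟩
  · refine eq_univ_of_forall fun m => ?_
    obtain ⟨i, hi⟩ := exists_mem_iterateBlock hg m
    exact mem_sUnion.2
      ⟨iterateBlock g i, mem_iUnion.2 ⟨⟨i % 2, Nat.mod_lt _ two_pos⟩, i, rfl, rfl⟩, hi⟩
  · rintro k _ ⟨i, -, rfl⟩
    exact ⟨_, iterateBlock_subset_cball g i⟩

theorem not_asdimLE_zero : ¬ AsdimLE Ffam 0 :=
  not_asdimLE_zero_of_finite_cball succEntourage_mem (fun m => by simp)
    fun _ hH => finite_cball hH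

end Ffam

/-- `asdim (ω, F) = 1`. -/
theorem asdim_Ffam_eq_one : AsdimLE Ffam 1 ∧ ¬ AsdimLE Ffam 0 :=
  ⟨Ffam.asdimLE_one, Ffam.not_asdimLE_zero⟩
end

section
/- Let F ∈ F be a symmetric entourage with F = F⁻¹ and (n, n+1) ∈ F for all n ∈ ω. Define P₀ = F[0] and P_{n+1} = F[P_n] \ (P₀ ∪ … ∪ P_n). Then the sets P_n cover ω, and the two families {P_{2n} : n ∈ ω} and {P_{2n+1} : n ∈ ω} are each F-disjoint. -/
/-!
Each `P (n + 1)` consists of the points of `F[P n]` not already covered, so `P m` and `P n` are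
disjoint for `m ≠ n` and `F[P a] ⊆ P 0 ∪ … ∪ P (a + 1)`. Hence `F[P a]` misses `P b` whenever
`a + 2 ≤ b`, and by symmetry of `F` also whenever `b + 2 ≤ a`; distinct indices of equal parity
are at distance at least two. The union of all `P n` is closed under `F`-balls, contains `1 ∈ F[0]`,
and `F` links every `n` with `n + 1` in both directions, so this union is all of `ω`.
-/

open Set Pointwise Filter Topology

section Balls

variable {X : Type*} {E : Set (X × X)}

theorem mem_cballSet {A : Set X} {x : X} : x ∈ cballSet E A ↔ ∃ a ∈ A, (a, x) ∈ E := by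
  simp [cballSet, cball]

theorem cballSet_inter_eq_empty_comm (hsym : ∀ p : X × X, p ∈ E → (p.2, p.1) ∈ E)
    {A B : Set X} (h : cballSet E A ∩ B = ∅) : cballSet E B ∩ A = ∅ := by
  refine eq_empty_of_forall_notMem fun x ⟨hxB, hxA⟩ => ?_
  obtain ⟨b, hb, hbx⟩ := mem_cballSet.1 hxB
  exact (eq_empty_iff_forall_notMem.1 h) b ⟨mem_cballSet.2 ⟨x, hxA, hsym _ hbx⟩, hb⟩

end Balls

def IsBallLayering {X : Type*} (E : Set (X × X)) (P : ℕ → Set X) : Prop :=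
  ∀ n, P (n + 1) = cballSet E (P n) \ ⋃ i ≤ n, P i

namespace IsBallLayering

variable {X : Type*} {E : Set (X × X)} {P : ℕ → Set X}

theorem cballSet_subset (h : IsBallLayering E P) (n : ℕ) :
    cballSet E (P n) ⊆ ⋃ i ≤ n + 1, P i := by
  intro x hx
  by_cases hx' : x ∈ ⋃ i ≤ n, P i
  · exact biUnion_mono (fun _ => Nat.le_succ_of_le) (fun _ _ => subset_rfl) hx'
  · exact mem_biUnion (le_refl (n + 1)) (by rw [h n]; exact ⟨hx, hx'⟩)

theorem notMem_of_lt (h : IsBallLayering E P) {m n : ℕ} (hmn : m < n) {x : X} (hm : x ∈ P m) :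
    x ∉ P n := by
  obtain ⟨k, rfl⟩ := Nat.exists_eq_add_of_lt hmn
  rw [h]
  exact fun hx => hx.2 (mem_biUnion (Nat.le_add_right m k) hm)

theorem cballSet_inter_eq_empty_of_add_two_le (h : IsBallLayering E P) {a b : ℕ}
    (hab : a + 2 ≤ b) : cballSet E (P a) ∩ P b = ∅ := by
  refine eq_empty_of_forall_notMem fun x ⟨hxa, hxb⟩ => ?_
  obtain ⟨i, hi, hxi⟩ := mem_iUnion₂.1 (h.cballSet_subset a hxa)
  exact h.notMem_of_lt (by omega : i < b) hxi hxb

theorem cballSet_inter_eq_empty (h : IsBallLayering E P)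
    (hsym : ∀ p : X × X, p ∈ E → (p.2, p.1) ∈ E) {a b : ℕ} (hab : a + 2 ≤ b ∨ b + 2 ≤ a) :
    cballSet E (P a) ∩ P b = ∅ := by
  rcases hab with hab | hab
  · exact h.cballSet_inter_eq_empty_of_add_two_le hab
  · exact cballSet_inter_eq_empty_comm hsym (h.cballSet_inter_eq_empty_of_add_two_le hab)

theorem cballSet_iUnion_subset (h : IsBallLayering E P) : cballSet E (⋃ n, P n) ⊆ ⋃ n, P n := by
  intro x hx
  obtain ⟨a, ha, hax⟩ := mem_cballSet.1 hx
  obtain ⟨n, hn⟩ := mem_iUnion.1 ha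
  obtain ⟨i, -, hi⟩ := mem_iUnion₂.1 (h.cballSet_subset n (mem_cballSet.2 ⟨a, hn, hax⟩))
  exact mem_iUnion.2 ⟨i, hi⟩

end IsBallLayering

theorem eq_univ_of_cballSet_subset {E : Set (ℕ × ℕ)} (hsucc : ∀ n : ℕ, (n, n + 1) ∈ E)
    (hpred : ∀ n : ℕ, (n + 1, n) ∈ E) {U : Set ℕ} (hU : U.Nonempty)
    (hclosed : cballSet E U ⊆ U) : U = univ := by
  have hzero : ∀ k, k ∈ U → 0 ∈ U := by
    intro k hk
    induction k with
    | zero => exact hk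
    | succ k ih => exact ih (hclosed (mem_cballSet.2 ⟨k + 1, hk, hpred k⟩))
  obtain ⟨k, hk⟩ := hU
  refine eq_univ_of_forall fun n => ?_
  induction n with
  | zero => exact hzero k hk
  | succ n ih => exact hclosed (mem_cballSet.2 ⟨n, ih, hsucc n⟩)

theorem Ffam_partition_general (F : Set (ℕ × ℕ))
    (hsym : ∀ p : ℕ × ℕ, p ∈ F → (p.2, p.1) ∈ F)
    (hsucc : ∀ n : ℕ, (n, n + 1) ∈ F)
    (P : ℕ → Set ℕ) (hP0 : P 0 = cball F 0)
    (hPs : ∀ n : ℕ, P (n + 1) = cballSet F (P n) \ ⋃ i ≤ n, P i) :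
    (⋃ n, P n) = univ ∧
    (∀ m n : ℕ, P (2 * m) ≠ P (2 * n) → cballSet F (P (2 * m)) ∩ P (2 * n) = ∅) ∧
    (∀ m n : ℕ, P (2 * m + 1) ≠ P (2 * n + 1) →
      cballSet F (P (2 * m + 1)) ∩ P (2 * n + 1) = ∅) := by
  have hlayers : IsBallLayering F P := hPs
  have hparity : ∀ a b, a ≠ b → a % 2 = b % 2 → cballSet F (P a) ∩ P b = ∅ :=
    fun _ _ hne hpar => hlayers.cballSet_inter_eq_empty hsym (by omega)
  have hone : 1 ∈ ⋃ n, P n := mem_iUnion.2 ⟨0, by rw [hP0]; exact hsucc 0⟩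
  refine ⟨?_, fun m n hne => hparity _ _ ?_ (by omega),
    fun m n hne => hparity _ _ ?_ (by omega)⟩
  · exact eq_univ_of_cballSet_subset hsucc (fun n => hsym _ (hsucc n)) ⟨1, hone⟩
      hlayers.cballSet_iUnion_subset
  · exact fun h => hne (congrArg P h)
  · exact fun h => hne (congrArg P h)

/-- the sets `P n` cover `ω` and the even and odd families are `F`-disjoint. -/
theorem Ffam_partition (F : Set (ℕ × ℕ)) (hF : F ∈ Ffam)
    (hsym : ∀ p : ℕ × ℕ, p ∈ F → (p.2, p.1) ∈ F)
    (hsucc : ∀ n : ℕ, (n, n + 1) ∈ F)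
    (P : ℕ → Set ℕ) (hP0 : P 0 = cball F 0)
    (hPs : ∀ n : ℕ, P (n + 1) = cballSet F (P n) \ ⋃ i ≤ n, P i) :
    (⋃ n, P n) = univ ∧
    (∀ m n : ℕ, P (2 * m) ≠ P (2 * n) → cballSet F (P (2 * m)) ∩ P (2 * n) = ∅) ∧
    (∀ m n : ℕ, P (2 * m + 1) ≠ P (2 * n + 1) →
      cballSet F (P (2 * m + 1)) ∩ P (2 * n + 1) = ∅) :=
  Ffam_partition_general F hsym hsucc P hP0 hPs
end

section
/- The asymptotic dimension of (ω, F) is strictly positive: ω cannot be partitioned into a single F₀-disjoint uniformly bounded family for the entourage F₀ containing all pairs (n, n+1); hence asdim(ω, F) ≠ 0. -/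
/-!
Consecutive numbers are `F₀`-close, so in an `F₀`-disjoint cover of `ω` the member containing `0`
contains every `n` by induction, i.e. it is all of `ω`. But balls of entourages in `F` are finite,
so no member of a uniformly bounded family can be infinite.
-/

open Set Pointwise Filter Topology

theorem cball_finite_of_mem_Ffam {H : Set (ℕ × ℕ)} (hH : H ∈ Ffam) (x : ℕ) :
    (cball H x).Finite := by
  obtain ⟨ψ, -, hHψ⟩ := hH
  exact (ψ x).finite_toSet.subset fun _ hy => hHψ hy

theorem IsBoundedFam.finite_of_mem_Ffam {H : Set (ℕ × ℕ)} {M : Set (Set ℕ)} (hH : H ∈ Ffam)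
    (hM : IsBoundedFam H M) {A : Set ℕ} (hA : A ∈ M) : A.Finite := by
  obtain ⟨x, hx⟩ := hM A hA
  exact (cball_finite_of_mem_Ffam hH x).subset hx

theorem IsDisjFam.succ_mem_of_mem {E : Set (ℕ × ℕ)} {M : Set (Set ℕ)} (hM : IsDisjFam E M)
    (hcov : ⋃₀ M = univ) (hsucc : ∀ n, (n, n + 1) ∈ E) {A : Set ℕ} (hA : A ∈ M) {n : ℕ}
    (hn : n ∈ A) : n + 1 ∈ A := by
  obtain ⟨B, hB, hnB⟩ : n + 1 ∈ ⋃₀ M := hcov ▸ mem_univ _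
  by_contra hnA
  have hAB : A ≠ B := fun h => hnA (h ▸ hnB)
  have hmem : n + 1 ∈ cballSet E A ∩ B := ⟨mem_biUnion hn (hsucc n), hnB⟩
  rwa [hM A hA B hB hAB] at hmem

theorem IsDisjFam.univ_mem_of_succ {E : Set (ℕ × ℕ)} {M : Set (Set ℕ)} (hM : IsDisjFam E M)
    (hcov : ⋃₀ M = univ) (hsucc : ∀ n, (n, n + 1) ∈ E) : univ ∈ M := by
  obtain ⟨A, hA, h0A⟩ : 0 ∈ ⋃₀ M := hcov ▸ mem_univ _
  have hall : ∀ n, n ∈ A := fun n => by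
    induction n with
    | zero => exact h0A
    | succ n ih => exact hM.succ_mem_of_mem hcov hsucc hA ih
  rwa [eq_univ_of_forall hall] at hA

theorem AsdimLE.exists_cover_zero {X : Type*} {C : Set (Set (X × X))} (h : AsdimLE C 0)
    {E : Set (X × X)} (hE : E ∈ C) :
    ∃ H ∈ C, ∃ M : Set (Set X), ⋃₀ M = univ ∧ IsBoundedFam H M ∧ IsDisjFam E M := by
  obtain ⟨H, hH, M, hcov, hbd, hdisj⟩ := h E hE
  refine ⟨H, hH, M 0, ?_, hbd 0, hdisj 0⟩
  rwa [show (⋃ i, M i) = M 0 from iSup_unique (ι := Fin 1) M] at hcov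

/-- `asdim (ω, F) ≠ 0`. -/
theorem asdim_Ffam_pos (F0 : Set (ℕ × ℕ)) (hF0 : F0 ∈ Ffam)
    (hsucc : ∀ n : ℕ, (n, n + 1) ∈ F0) :
    (¬ ∃ H ∈ Ffam, ∃ M : Set (Set ℕ),
      ⋃₀ M = univ ∧ IsBoundedFam H M ∧ IsDisjFam F0 M) ∧
    ¬ AsdimLE Ffam 0 := by
  have no_cover : ¬ ∃ H ∈ Ffam, ∃ M : Set (Set ℕ),
      ⋃₀ M = univ ∧ IsBoundedFam H M ∧ IsDisjFam F0 M := by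
    rintro ⟨H, hH, M, hcov, hbd, hdisj⟩
    exact infinite_univ (hbd.finite_of_mem_Ffam hH (hdisj.univ_mem_of_succ hcov hsucc))
  exact ⟨no_cover, fun h => no_cover (h.exists_cover_zero hF0)⟩
end

section
/- Let G be a topological group and (a_n) an injective sequence in G, with A = {a_n : n ∈ ω}. Let φ : A → Finset(A) satisfy a_n ∈ φ(a_n) for all n and {a_m : a_n ∈ φ(a_m)} finite for all n, and suppose every injective sequence in K = ∪_n φ(a_n)·a_n⁻¹ converges to the identity of G. Then K is contained in a compact subset of G and φ(a_n) ⊆ K·a_n for all n. -/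
open Set Pointwise Filter Topology

section InjectiveSequences

variable {X : Type*} [TopologicalSpace X] {S : Set X} {x : X}

theorem Set.finite_diff_of_forall_injective_tendsto
    (hS : ∀ s : ℕ → X, Function.Injective s → (∀ n, s n ∈ S) → Tendsto s atTop (𝓝 x))
    {U : Set X} (hU : U ∈ 𝓝 x) : (S \ U).Finite := by
  by_contra hinf
  -- an enumeration of the infinite set `S \ U` is an injective sequence in `S` avoiding `U`
  let s := (Set.not_finite.mp hinf).natEmbedding
  have hs : Tendsto (fun n ↦ (s n : X)) atTop (𝓝 x) :=
    hS _ (Subtype.val_injective.comp s.injective) fun n ↦ (s n).2.1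
  obtain ⟨n, hn⟩ := (hs.eventually_mem hU).exists
  exact (s n).2.2 hn

theorem isCompact_insert_of_forall_injective_tendsto
    (hS : ∀ s : ℕ → X, Function.Injective s → (∀ n, s n ∈ S) → Tendsto s atTop (𝓝 x)) :
    IsCompact (insert x S) := by
  have hcofinite : Tendsto ((↑) : S → X) cofinite (𝓝 x) := fun U hU ↦
    ((Set.finite_diff_of_forall_injective_tendsto hS hU).preimage
      Subtype.val_injective.injOn).subset fun y hy ↦ ⟨y.2, hy⟩
  simpa using hcofinite.isCompact_insert_range_of_cofinite

end InjectiveSequences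

theorem K_precompact_general {G : Type*} [Group G] [TopologicalSpace G]
    (a : ℕ → G) (φ : ℕ → Finset G)
    (K : Set G) (hK : K = ⋃ n, (φ n : Set G) * {(a n)⁻¹})
    (hconv : ∀ s : ℕ → G, Function.Injective s → (∀ n, s n ∈ K) →
      Tendsto s atTop (𝓝 1)) :
    (∃ C : Set G, IsCompact C ∧ K ⊆ C) ∧ ∀ n, (φ n : Set G) ⊆ K * {a n} := by
  refine ⟨⟨insert 1 K, isCompact_insert_of_forall_injective_tendsto hconv,
    Set.subset_insert 1 K⟩, fun n x hx ↦ ?_⟩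
  have hxK : x * (a n)⁻¹ ∈ K := hK ▸ Set.mem_iUnion_of_mem n (Set.mul_mem_mul hx rfl)
  simpa using Set.mul_mem_mul hxK (Set.mem_singleton (a n))

/-- `K` is precompact and `φ(a_n) ⊆ K · a_n`. -/
theorem K_precompact {G : Type*} [Group G] [TopologicalSpace G] [IsTopologicalGroup G]
    [T2Space G] (a : ℕ → G) (ha : Function.Injective a) (φ : ℕ → Finset G)
    (hsub : ∀ n, (φ n : Set G) ⊆ Set.range a)
    (hmem : ∀ n, a n ∈ φ n) (hfin : ∀ n, {m | a n ∈ φ m}.Finite)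
    (K : Set G) (hK : K = ⋃ n, (φ n : Set G) * {(a n)⁻¹})
    (hconv : ∀ s : ℕ → G, Function.Injective s → (∀ n, s n ∈ K) →
      Tendsto s atTop (𝓝 1)) :
    (∃ C : Set G, IsCompact C ∧ K ⊆ C) ∧ ∀ n, (φ n : Set G) ⊆ K * {a n} :=
  K_precompact_general a φ K hK hconv
end

section
/- Let G be a subgroup of a metrizable topological group H with an injective sequence (a_n) in G converging to h ∈ H \ G, and A = {a_n : n ∈ ω}. Then the subspace A of the coarse space (G, C), where C is the group ideal of precompact subsets of G, is asymorphic to (ω, F) via the map n ↦ a_n. -/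
open Set Pointwise Filter Topology

/-- The coarse structure on a topological group defined by the ideal of precompact sets. -/
def grpEnt (G : Type*) [Group G] [TopologicalSpace G] : Set (Set (G × G)) :=
  {E | ∃ K : Set G, IsCompact (closure K) ∧ ∀ p ∈ E, p.1 = p.2 ∨ p.1 ∈ K * {p.2}}

/-- the subspace `A` of `(G, C)` is asymorphic to `(ω, F)` via `n ↦ a_n`. -/
theorem subspace_asymorphic_Ffam {H : Type*} [Group H] [TopologicalSpace H]
    [IsTopologicalGroup H] [TopologicalSpace.MetrizableSpace H]
    (G : Subgroup H) (a : ℕ → G) (ha : Function.Injective a) (h : H)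
    (hlim : Tendsto (fun n => (a n : H)) atTop (𝓝 h)) (hh : h ∉ G) :
    MacroUniform Ffam
      {E | E ∈ grpEnt G ∧ E ⊆ Set.range a ×ˢ Set.range a} (fun n => a n) ∧
    ∃ g : G → ℕ, (∀ n, g (a n) = n) ∧
      ∀ E ∈ {E | E ∈ grpEnt G ∧ E ⊆ Set.range a ×ˢ Set.range a}, ∃ E' ∈ Ffam,
        ∀ x ∈ Set.range a, g '' cball E x ⊆ cball E' (g x) := by
  constructor
  · -- the forward map `n ↦ a n` is macro-uniform
    rintro E ⟨φ, ⟨hφ1, hφ2⟩, hEφ⟩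
    set f : {p : ℕ × ℕ // p.2 ∈ φ p.1} → G := fun p => a p.1.1 * (a p.1.2)⁻¹ with hf
    -- `f` tends to `1` along the cofinite filter
    have hcof : Tendsto f cofinite (𝓝 (1 : G)) := by
      rw [Topology.IsInducing.subtypeVal.tendsto_nhds_iff]
      have hmul : Tendsto (fun p : ℕ × ℕ => (a p.1 : H) * (a p.2 : H)⁻¹) atTop
          (𝓝 (h * h⁻¹)) := by
        rw [← prod_atTop_atTop_eq]
        exact (hlim.comp tendsto_fst).mul (hlim.comp tendsto_snd).inv
      rw [mul_inv_cancel] at hmul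
      rw [tendsto_def]
      intro U hU
      rw [mem_cofinite]
      obtain ⟨N, hN⟩ := eventually_atTop.mp (hmul.eventually_mem hU)
      -- bad set is finite
      have hB : (((⋃ n ∈ Iio N.1, ({n} : Set ℕ) ×ˢ (φ n : Set ℕ)) ∪
          ⋃ k ∈ Iio N.2, {m | k ∈ φ m} ×ˢ ({k} : Set ℕ))).Finite := by
        apply Set.Finite.union
        · exact (Set.finite_Iio N.1).biUnion fun n _ =>
            (Set.finite_singleton n).prod (φ n).finite_toSet
        · exact (Set.finite_Iio N.2).biUnion fun k _ => (hφ2 k).prod (Set.finite_singleton k)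
      apply (hB.preimage (Subtype.val_injective.injOn)).subset
      intro p hp
      simp only [Set.mem_compl_iff, Set.mem_preimage] at hp ⊢
      by_cases h1 : N.1 ≤ p.1.1 ∧ N.2 ≤ p.1.2
      · exfalso
        apply hp
        have := hN p.1 h1
        simpa [hf] using this
      · rcases not_and_or.mp h1 with h1 | h1
        · exact Or.inl (Set.mem_biUnion (Set.mem_Iio.mpr (not_le.mp h1))
            ⟨rfl, by exact_mod_cast p.2⟩)
        · exact Or.inr (Set.mem_biUnion (Set.mem_Iio.mpr (not_le.mp h1)) ⟨p.2, rfl⟩)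
    have hK : IsCompact (insert (1 : G) (Set.range f)) :=
      hcof.isCompact_insert_range_of_cofinite
    refine ⟨(fun p : ℕ × ℕ => (a p.1, a p.2)) '' E,
      ⟨⟨insert (1 : G) (Set.range f), ?_, ?_⟩, ?_⟩, ?_⟩
    · rw [hK.isClosed.closure_eq]; exact hK
    · rintro q ⟨p, hpE, rfl⟩
      right
      refine ⟨a p.1 * (a p.2)⁻¹, Set.mem_insert_of_mem _ ⟨⟨p, hEφ hpE⟩, rfl⟩,
        a p.2, rfl, by group⟩
    · rintro q ⟨p, _, rfl⟩
      exact ⟨⟨p.1, rfl⟩, ⟨p.2, rfl⟩⟩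
    · intro n
      rintro y ⟨k, hk, rfl⟩
      exact ⟨(n, k), hk, rfl⟩
  · -- the inverse map
    have keyfin : ∀ C : Set G, IsCompact C → {k : ℕ | a k ∈ C}.Finite := by
      intro C hC
      by_contra hinf
      have hfreq : ∃ᶠ k in atTop, (a k : H) ∈ Subtype.val '' C := by
        rw [Nat.frequently_atTop_iff_infinite]
        exact Set.Infinite.mono (fun k hk => Set.mem_image_of_mem _ hk) hinf
      have hcl : IsClosed (Subtype.val '' C) := (hC.image continuous_subtype_val).isClosed
      obtain ⟨x, hxC, hxh⟩ := hcl.mem_of_frequently_of_tendsto hfreq hlim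
      exact hh (hxh ▸ x.2)
    refine ⟨Function.invFun a, fun n => Function.leftInverse_invFun ha n, ?_⟩
    rintro E ⟨⟨K, hKc, hKE⟩, hEr⟩
    have hfin1 : ∀ n : ℕ, {k : ℕ | (a n : G) ∈ K * {a k}}.Finite := by
      intro n
      have hc : IsCompact ((fun x : G => x⁻¹ * a n) '' closure K) :=
        hKc.image (continuous_inv.mul continuous_const)
      apply (keyfin _ hc).subset
      intro k hk
      obtain ⟨c, hc', d, hd, hcd⟩ := Set.mem_mul.mp hk
      rw [Set.mem_singleton_iff] at hd
      subst hd
      exact ⟨c, subset_closure hc', by rw [← hcd]; group⟩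
    have hfin2 : ∀ k : ℕ, {m : ℕ | (a m : G) ∈ K * {a k}}.Finite := by
      intro k
      have hc : IsCompact ((fun x : G => x * a k) '' closure K) :=
        hKc.image (continuous_id.mul continuous_const)
      apply (keyfin _ hc).subset
      intro m hm
      obtain ⟨c, hc', d, hd, hcd⟩ := Set.mem_mul.mp hm
      rw [Set.mem_singleton_iff] at hd
      subst hd
      exact ⟨c, subset_closure hc', hcd⟩
    refine ⟨{p : ℕ × ℕ | p.2 ∈ insert p.1 (hfin1 p.1).toFinset},
      ⟨fun n => insert n (hfin1 n).toFinset, ⟨fun n => Finset.mem_insert_self n _, ?_⟩,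
        subset_rfl⟩, ?_⟩
    · intro n
      apply ((hfin2 n).union (Set.finite_singleton n)).subset
      intro m hm
      simp only [Set.mem_setOf_eq, Finset.mem_insert, Set.Finite.mem_toFinset] at hm
      rcases hm with rfl | hm
      · exact Or.inr rfl
      · exact Or.inl hm
    · rintro x ⟨n, rfl⟩
      rintro y ⟨z, hz, rfl⟩
      obtain ⟨k, hk⟩ := (hEr hz).2
      subst hk
      simp only [cball, Set.mem_setOf_eq, Function.leftInverse_invFun ha n,
        Function.leftInverse_invFun ha k]
      rcases hKE _ hz with heq | hmem
      · have : n = k := ha heq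
        subst this
        exact Finset.mem_insert_self n _
      · exact Finset.mem_insert_of_mem ((hfin1 n).mem_toFinset.mpr hmem)
end

section
/- Let G be a non-discrete countable metrizable abelian topological group with completion H. For every natural number m there exist elements h₁, …, h_m ∈ H \ G such that whenever i₁h₁ + … + i_m h_m ∈ G with each i_j ∈ {-1, 0, 1}, it follows that i₁ = … = i_m = 0. -/
open Set Pointwise Filter Topology Uniformity

/-- In a complete metrizable uniform additive group with no isolated point at `0`,
the complement of a countable set is nonempty. -/
lemma countable_compl_nonempty' {H : Type*} [UniformSpace H] [AddCommGroup H]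
    [IsUniformAddGroup H] [CompleteSpace H] [TopologicalSpace.MetrizableSpace H]
    (h0 : Filter.NeBot (𝓝[≠] (0 : H))) {S : Set H} (hS : S.Countable) :
    ∃ x : H, x ∉ S := by
  haveI : (𝓤 H).IsCountablyGenerated := by
    rw [uniformity_eq_comap_nhds_zero]
    exact Filter.comap.isCountablyGenerated _ _
  haveI : ∀ x : H, Filter.NeBot (𝓝[≠] x) := by
    intro x
    have hmap := (Homeomorph.addLeft x).map_punctured_nhds_eq 0
    simp only [Homeomorph.coe_addLeft, add_zero] at hmap
    rw [← hmap]
    exact Filter.NeBot.map h0 _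
  have hmeagre : IsMeagre S := by
    rw [isMeagre_iff_countable_union_isNowhereDense]
    refine ⟨(fun x => ({x} : Set H)) '' S, ?_, hS.image _, ?_⟩
    · rintro t ⟨x, -, rfl⟩
      rw [(isClosed_singleton).isNowhereDense_iff]
      rw [interior_eq_empty_iff_dense_compl]
      exact dense_compl_singleton x
    · intro x hx
      exact ⟨{x}, ⟨x, hx, rfl⟩, rfl⟩
  have hdense : Dense Sᶜ := dense_of_mem_residual hmeagre
  haveI : Nonempty H := ⟨0⟩
  obtain ⟨x, hx⟩ := hdense.nonempty
  exact ⟨x, hx⟩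

/-- choice of independent elements of `H \\ G`. -/
theorem exists_independent_elements {H : Type*} [UniformSpace H] [AddCommGroup H]
    [IsUniformAddGroup H] [CompleteSpace H] [TopologicalSpace.MetrizableSpace H]
    (G : AddSubgroup H) (hd : Dense (G : Set H)) (hcount : Countable G)
    (hnd : ¬ DiscreteTopology G) :
    ∀ m : ℕ, ∃ h : Fin m → H, (∀ k, h k ∉ G) ∧
      ∀ i : Fin m → ℤ, (∀ k, i k = -1 ∨ i k = 0 ∨ i k = 1) →
        (∑ k, i k • h k) ∈ G → ∀ k, i k = 0 := by
  -- `0` is not isolated in `H`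
  have h0 : Filter.NeBot (𝓝[≠] (0 : H)) := by
    by_contra hbot
    rw [Filter.not_neBot] at hbot
    have hopen : IsOpen ({(0 : H)} : Set H) :=
      (isOpen_singleton_iff_punctured_nhds 0).2 hbot
    apply hnd
    apply discreteTopology_iff_isOpen_singleton_zero.2
    have : ((Subtype.val : G → H) ⁻¹' {(0 : H)}) = ({0} : Set G) := by
      ext g
      simp [ZeroMemClass.coe_eq_zero]
    rw [← this]
    exact hopen.preimage continuous_subtype_val
  have hGcount : (G : Set H).Countable := Set.countable_coe_iff.mpr hcount
  intro m
  induction m with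
  | zero =>
      exact ⟨Fin.elim0, fun k => k.elim0, fun i _ _ k => k.elim0⟩
  | succ m ih =>
      obtain ⟨h, hnotG, hind⟩ := ih
      -- bad set for the new element
      let f : G × (Fin m → ℤ) × Bool → H := fun p =>
        if p.2.2 then (p.1 : H) - ∑ k, p.2.1 k • h k else (∑ k, p.2.1 k • h k) - (p.1 : H)
      have hBc : (Set.range f ∪ (G : Set H)).Countable :=
        (Set.countable_range f).union hGcount
      obtain ⟨x, hx⟩ := countable_compl_nonempty' h0 hBc
      have hxG : x ∉ G := fun hxg => hx (Or.inr hxg)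
      have hxB : x ∉ Set.range f := fun hxr => hx (Or.inl hxr)
      refine ⟨(Fin.snoc h x : Fin (m + 1) → H), ?_, ?_⟩
      · intro k
        refine Fin.lastCases (motive := fun k => (Fin.snoc h x : Fin (m + 1) → H) k ∉ (G : Set H)) ?_ ?_ k
        · simpa [Fin.snoc] using hxG
        · intro j; simpa [Fin.snoc_castSucc] using hnotG j
      · intro i hi hsum
        have hsum' : (∑ k : Fin m, i k.castSucc • h k) + i (Fin.last m) • x ∈ G := by
          have := Fin.sum_univ_castSucc (fun k : Fin (m + 1) => i k • (Fin.snoc h x : Fin (m + 1) → H) k)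
          rw [this] at hsum
          simpa [Fin.snoc_castSucc, Fin.snoc] using hsum
        rcases hi (Fin.last m) with hlast | hlast | hlast
        · -- i last = -1 : x = ∑ - g, contradiction
          exfalso
          rw [hlast] at hsum'
          simp only [neg_smul, one_smul] at hsum'
          set g : H := (∑ k : Fin m, i k.castSucc • h k) - x with hg
          have hgG : g ∈ G := by simpa [hg, sub_eq_add_neg] using hsum'
          apply hxB
          refine ⟨⟨⟨g, hgG⟩, fun k => i k.castSucc, false⟩, ?_⟩
          simp only [f]
          rw [if_neg Bool.false_ne_true, hg]
          abel
        · -- i last = 0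
          have hz : (∑ k : Fin m, i k.castSucc • h k) ∈ G := by
            rw [hlast] at hsum'; simpa using hsum'
          have hall : ∀ k : Fin m, i k.castSucc = 0 :=
            hind (fun k => i k.castSucc) (fun k => hi k.castSucc) hz
          intro k
          refine Fin.lastCases ?_ ?_ k
          · exact hlast
          · exact hall
        · -- i last = 1 : x = g - ∑, contradiction
          exfalso
          rw [hlast] at hsum'
          simp only [one_smul] at hsum'
          set g : H := (∑ k : Fin m, i k.castSucc • h k) + x with hg
          have hgG : g ∈ G := hsum'
          apply hxB
          refine ⟨⟨⟨g, hgG⟩, fun k => i k.castSucc, true⟩, ?_⟩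
          simp only [f]
          rw [if_pos trivial, hg]
          abel
end

section
/- Let H be a metrizable abelian topological group, G a dense subgroup, and h₁, …, h_m ∈ H \ G elements such that i₁h₁ + … + i_m h_m ∈ G with i_j ∈ {-1,0,1} forces all i_j = 0. Then one can choose injective sequences (a_{1,n}), …, (a_{m,n}) in G with a_{k,n} → h_k such that the sum map (i₁, …, i_m) ↦ a_{1,i₁} + … + a_{m,i_m} is injective from ω^m into G. -/
open Set Pointwise Filter Topology

/-- choice of injective sequences with injective sum map. -/
theorem exists_injective_sequences {H : Type*} [AddCommGroup H] [TopologicalSpace H]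
    [IsTopologicalAddGroup H] [TopologicalSpace.MetrizableSpace H]
    (G : AddSubgroup H) (hd : Dense (G : Set H)) (m : ℕ) (h : Fin m → H)
    (hh : ∀ k, h k ∉ G)
    (hind : ∀ i : Fin m → ℤ, (∀ k, i k = -1 ∨ i k = 0 ∨ i k = 1) →
      (∑ k, i k • h k) ∈ G → ∀ k, i k = 0) :
    ∃ a : Fin m → ℕ → H, (∀ k n, a k n ∈ G) ∧
      (∀ k, Function.Injective (a k)) ∧
      (∀ k, Tendsto (a k) atTop (𝓝 (h k))) ∧
      Function.Injective (fun i : Fin m → ℕ => ∑ k, a k (i k)) := by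
  classical
  rcases Nat.eq_zero_or_pos m with hm | hm
  · subst hm
    refine ⟨fun _ _ => 0, fun k => k.elim0, fun k => k.elim0, fun k => k.elim0, ?_⟩
    intro i j _
    funext k; exact k.elim0
  -- antitone neighborhood bases
  have hbasis : ∀ k : Fin m, ∃ u : ℕ → Set H, (𝓝 (h k)).HasAntitoneBasis u :=
    fun k => (𝓝 (h k)).exists_antitone_basis
  choose u hu using hbasis
  -- the family of "bad" values to avoid at stage t, given a history x
  set Bad : ℕ → (ℕ → H) → Set H := fun t x =>
    {z | z ∈ (G : Set H) ∧ ∃ A B : Finset ℕ, A ⊆ Finset.range t ∧ B ⊆ Finset.range t ∧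
      z = (∑ s ∈ A, x s) - ∑ s ∈ B, x s} with hBadDef
  have hBadFin : ∀ t x, (Bad t x).Finite := by
    intro t x
    have hsub : Bad t x ⊆ ↑(((Finset.range t).powerset ×ˢ (Finset.range t).powerset).image
        (fun p : Finset ℕ × Finset ℕ => (∑ s ∈ p.1, x s) - ∑ s ∈ p.2, x s)) := by
      rintro z ⟨-, A, B, hA, hB, rfl⟩
      simp only [Finset.coe_image, Set.mem_image, Finset.mem_coe, Finset.mem_product,
        Finset.mem_powerset]
      exact ⟨(A, B), ⟨hA, hB⟩, rfl⟩
    exact (Finset.finite_toSet _).subset hsub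
  -- at each step we can find a fresh element of G
  have hfresh : ∀ (t : ℕ) (x : ℕ → H), ∃ y, y ∈ (G : Set H) ∧
      (∀ kk : Fin m, (kk : ℕ) = t % m → y ∈ u kk (t / m)) ∧ y ∉ Bad t x := by
    intro t x
    set k : Fin m := ⟨t % m, Nat.mod_lt t hm⟩ with hk
    have hUopen : IsOpen (interior (u k (t / m)) \ Bad t x) :=
      isOpen_interior.sdiff (hBadFin t x).isClosed
    have hmem : h k ∈ interior (u k (t / m)) \ Bad t x := by
      refine ⟨?_, ?_⟩
      · exact mem_interior_iff_mem_nhds.mpr ((hu k).mem (t / m))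
      · rintro ⟨hzG, -⟩; exact hh k hzG
    obtain ⟨y, hyU, hyG⟩ := hd.inter_open_nonempty _ hUopen ⟨h k, hmem⟩
    refine ⟨y, hyG, ?_, hyU.2⟩
    intro kk hkk
    have : kk = k := Fin.ext hkk
    subst this
    exact interior_subset hyU.1
  choose step hstepG hstepU hstepB using hfresh
  -- construct the sequence by recursion
  let c : ℕ → ℕ → H := fun t =>
    Nat.rec (fun _ => (0 : H)) (fun t ih => Function.update ih t (step t ih)) t
  let b : ℕ → H := fun t => step t (c t)
  have hcsucc : ∀ t, c (t + 1) = Function.update (c t) t (step t (c t)) := fun _ => rfl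
  have hc : ∀ t s, s < t → c t s = b s := by
    intro t
    induction t with
    | zero => intro s hs; omega
    | succ t ih =>
      intro s hs
      rw [hcsucc t]
      rcases Nat.lt_succ_iff_lt_or_eq.mp hs with hs' | rfl
      · rw [Function.update_of_ne (by omega : s ≠ t)]; exact ih s hs'
      · rw [Function.update_self]
  have hBadcongr : ∀ t (x y : ℕ → H), (∀ s, s < t → x s = y s) → Bad t x = Bad t y := by
    intro t x y hxy
    have hsum : ∀ A : Finset ℕ, A ⊆ Finset.range t → ∑ s ∈ A, x s = ∑ s ∈ A, y s :=
      fun A hA => Finset.sum_congr rfl fun s hs => hxy s (Finset.mem_range.mp (hA hs))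
    ext z
    simp only [hBadDef, Set.mem_setOf_eq]
    constructor
    · rintro ⟨hzG, A, B, hA, hB, rfl⟩
      exact ⟨hzG, A, B, hA, hB, by rw [hsum A hA, hsum B hB]⟩
    · rintro ⟨hzG, A, B, hA, hB, rfl⟩
      exact ⟨hzG, A, B, hA, hB, by rw [hsum A hA, hsum B hB]⟩
  have hbG : ∀ t, b t ∈ (G : Set H) := fun t => hstepG t (c t)
  have hbU : ∀ t, ∀ kk : Fin m, (kk : ℕ) = t % m → b t ∈ u kk (t / m) :=
    fun t => hstepU t (c t)
  have hbB : ∀ t, b t ∉ Bad t b := by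
    intro t
    rw [← hBadcongr t (c t) b (fun s hs => hc t s hs)]
    exact hstepB t (c t)
  have hbne : ∀ (t : ℕ) (A B : Finset ℕ), A ⊆ Finset.range t → B ⊆ Finset.range t →
      b t ≠ (∑ s ∈ A, b s) - ∑ s ∈ B, b s := by
    intro t A B hA hB heq
    exact hbB t ⟨hbG t, A, B, hA, hB, heq⟩
  -- distinct indices give distinct values
  have hbij : ∀ p q : ℕ, p < q → b q ≠ b p := by
    intro p q hpq heq
    refine hbne q {p} ∅ ?_ (by simp) (by simpa using heq)
    simp [Finset.singleton_subset_iff, Finset.mem_range, hpq]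
  -- the main cancellation lemma
  have main : ∀ (P Q : Finset ℕ), Disjoint P Q → (P ∪ Q).Nonempty →
      (∑ t ∈ P, b t) = ∑ t ∈ Q, b t → False := by
    intro P Q hdisj hnon hsum
    set t0 := (P ∪ Q).max' hnon with ht0
    have hmax : ∀ s ∈ P ∪ Q, s ≤ t0 := fun s hs => Finset.le_max' _ s hs
    have key : ∀ (P Q : Finset ℕ), Disjoint P Q → (∀ s ∈ P ∪ Q, s ≤ t0) → t0 ∈ P →
        (∑ t ∈ P, b t) = ∑ t ∈ Q, b t → False := by
      intro P Q hd' hle ht0P hs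
      have hPsub : P.erase t0 ⊆ Finset.range t0 := by
        intro s hsx
        rcases Finset.mem_erase.mp hsx with ⟨hne, hsP⟩
        exact Finset.mem_range.mpr (lt_of_le_of_ne (hle s (Finset.mem_union_left _ hsP)) hne)
      have hQsub : Q ⊆ Finset.range t0 := by
        intro s hsQ
        have hne : s ≠ t0 := by
          rintro rfl
          exact (Finset.disjoint_left.mp hd' ht0P) hsQ
        exact Finset.mem_range.mpr (lt_of_le_of_ne (hle s (Finset.mem_union_right _ hsQ)) hne)
      have h1 : b t0 + ∑ s ∈ P.erase t0, b s = ∑ s ∈ P, b s :=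
        Finset.add_sum_erase P b ht0P
      have h2 : b t0 = (∑ s ∈ Q, b s) - ∑ s ∈ P.erase t0, b s := by
        rw [← hs, ← h1]; abel
      exact hbne t0 Q (P.erase t0) hQsub hPsub h2
    rcases Finset.mem_union.mp ((P ∪ Q).max'_mem hnon) with hmem | hmem
    · exact key P Q hdisj hmax hmem hsum
    · exact key Q P hdisj.symm (by simpa [Finset.union_comm] using hmax) hmem hsum.symm
  -- define the sequences
  refine ⟨fun k n => b (n * m + (k : ℕ)), fun k n => hbG _, ?_, ?_, ?_⟩
  · -- injectivity of each sequence
    intro k n n' heq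
    by_contra hne
    rcases Nat.lt_or_ge n n' with hlt | hge
    · have hlt' : n * m + (k : ℕ) < n' * m + (k : ℕ) := by
        have := Nat.mul_lt_mul_of_pos_right hlt hm; omega
      exact hbij _ _ hlt' heq.symm
    · have hlt : n' < n := lt_of_le_of_ne hge (fun e => hne e.symm)
      have hlt' : n' * m + (k : ℕ) < n * m + (k : ℕ) := by
        have := Nat.mul_lt_mul_of_pos_right hlt hm; omega
      exact hbij _ _ hlt' heq
  · -- convergence
    intro k
    refine (hu k).tendsto ?_
    intro n
    have e1 : (n * m + (k : ℕ)) % m = (k : ℕ) := by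
      rw [add_comm, Nat.add_mul_mod_self_right]; exact Nat.mod_eq_of_lt k.isLt
    have e2 : (n * m + (k : ℕ)) / m = n := by
      rw [mul_comm, Nat.mul_add_div hm, Nat.div_eq_of_lt k.isLt, add_zero]
    have := hbU (n * m + (k : ℕ)) k e1.symm
    rwa [e2] at this
  · -- injectivity of the sum map
    intro i j hij
    by_contra hne
    have hij' : (∑ k, b (i k * m + (k : ℕ))) = ∑ k, b (j k * m + (k : ℕ)) := hij
    set enc : (Fin m → ℕ) → Finset ℕ :=
      fun i => Finset.image (fun k : Fin m => i k * m + (k : ℕ)) Finset.univ with hencDef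
    have hmod : ∀ (i : Fin m → ℕ) (k : Fin m), (i k * m + (k : ℕ)) % m = (k : ℕ) := by
      intro i k
      rw [add_comm, Nat.add_mul_mod_self_right]; exact Nat.mod_eq_of_lt k.isLt
    have hencinj : ∀ i : Fin m → ℕ, ∀ x ∈ Finset.univ, ∀ y ∈ Finset.univ,
        (fun k : Fin m => i k * m + (k : ℕ)) x = (fun k : Fin m => i k * m + (k : ℕ)) y →
        x = y := by
      intro i x _ y _ hxy
      have := congrArg (· % m) hxy
      simp only [hmod i] at this
      exact Fin.ext this
    have hsum : ∀ i : Fin m → ℕ, (∑ t ∈ enc i, b t) = ∑ k, b (i k * m + (k : ℕ)) :=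
      fun i => Finset.sum_image (hencinj i)
    have hIJ : enc i ≠ enc j := by
      intro hEq
      apply hne
      funext k
      have hk : i k * m + (k : ℕ) ∈ enc j :=
        hEq ▸ Finset.mem_image_of_mem _ (Finset.mem_univ k)
      obtain ⟨k', -, hk'⟩ := Finset.mem_image.mp hk
      have h1 : (k' : ℕ) = (k : ℕ) := by
        have := congrArg (· % m) hk'
        simpa only [hmod j, hmod i] using this
      have hkk : k' = k := Fin.ext h1
      subst hkk
      have h2 : j k' * m = i k' * m := by omega
      exact (Nat.eq_of_mul_eq_mul_right hm h2).symm
    have hdisj : Disjoint (enc i \ enc j) (enc j \ enc i) := disjoint_sdiff_sdiff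
    have hnon : ((enc i \ enc j) ∪ (enc j \ enc i)).Nonempty := by
      rw [Finset.nonempty_iff_ne_empty]
      intro hE
      rcases Finset.union_eq_empty.mp hE with ⟨h1, h2⟩
      exact hIJ (Finset.Subset.antisymm (Finset.sdiff_eq_empty_iff_subset.mp h1)
        (Finset.sdiff_eq_empty_iff_subset.mp h2))
    have hsplit : ∀ S T : Finset ℕ,
        (∑ t ∈ S, b t) = (∑ t ∈ S \ T, b t) + ∑ t ∈ S ∩ T, b t := by
      intro S T
      have := Finset.sum_union (f := b) (Finset.disjoint_sdiff_inter S T)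
      rw [Finset.sdiff_union_inter] at this
      exact this
    have hsum' : (∑ t ∈ enc i \ enc j, b t) = ∑ t ∈ enc j \ enc i, b t := by
      have e1 := hsplit (enc i) (enc j)
      have e2 := hsplit (enc j) (enc i)
      rw [Finset.inter_comm] at e2
      have : (∑ t ∈ enc i, b t) = ∑ t ∈ enc j, b t := by
        rw [hsum i, hsum j]; exact hij'
      rw [e1, e2] at this
      exact add_right_cancel this
    exact main _ _ hdisj hnon hsum'
end

section
/- Let H be a metrizable abelian group, G a subgroup, and h₁,…,h_m ∈ H \ G satisfying the {-1,0,1}-independence condition over G, with injective sequences a_{k,n} → h_k from G such that the sum map is injective. Set A_k = {a_{k,n} : n ∈ ω} and A = A₁ + … + A_m. For every compact K ⊆ G containing 0, the sets φ_k(a_{k,j}) = {a_{k,s} ∈ A_k : (A₁ + … + A_{k-1} + a_{k,j} + A_{k+1} + … + A_m) ∩ (K + A₁ + … + A_{k-1} + a_{k,s} + A_{k+1} + … + A_m) ≠ ∅} are finite for all k and j. -/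
open Set Pointwise Filter Topology

variable {H : Type*} [AddCommGroup H] [TopologicalSpace H] [IsTopologicalAddGroup H]
  [TopologicalSpace.MetrizableSpace H]

/-- the sets `φ_k(a_{k,j})` are finite. -/
theorem phi_finite (G : AddSubgroup H) {m : ℕ} (h : Fin m → H) (hh : ∀ k, h k ∉ G)
    (hind : ∀ i : Fin m → ℤ, (∀ k, i k = -1 ∨ i k = 0 ∨ i k = 1) →
      (∑ k, i k • h k) ∈ G → ∀ k, i k = 0)
    (a : Fin m → ℕ → H) (haG : ∀ k n, a k n ∈ G)
    (hainj : ∀ k, Function.Injective (a k))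
    (halim : ∀ k, Tendsto (a k) atTop (𝓝 (h k)))
    (hsum : Function.Injective (fun i : Fin m → ℕ => ∑ k, a k (i k)))
    (K : Set H) (hKc : IsCompact K) (hKG : K ⊆ (G : Set H)) (hK0 : (0 : H) ∈ K) :
    ∀ (k : Fin m) (j : ℕ),
      {s : ℕ | ∃ c d : Fin m → H, c k = a k j ∧ d k = a k s ∧
        (∀ l, l ≠ k → ∃ n, c l = a l n) ∧ (∀ l, l ≠ k → ∃ n, d l = a l n) ∧
        ∃ κ ∈ K, ∑ l, c l = κ + ∑ l, d l}.Finite := by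
  classical
  intro k j
  by_contra hfin
  set S : Set ℕ := {s : ℕ | ∃ c d : Fin m → H, c k = a k j ∧ d k = a k s ∧
      (∀ l, l ≠ k → ∃ n, c l = a l n) ∧ (∀ l, l ≠ k → ∃ n, d l = a l n) ∧
      ∃ κ ∈ K, ∑ l, c l = κ + ∑ l, d l} with hSdef
  have hS : S.Infinite := hfin
  have hS' : ∀ s ∈ S, ∃ c d : Fin m → H, c k = a k j ∧ d k = a k s ∧
      (∀ l, l ≠ k → ∃ n, c l = a l n) ∧ (∀ l, l ≠ k → ∃ n, d l = a l n) ∧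
      ∃ κ ∈ K, ∑ l, c l = κ + ∑ l, d l := fun s hs => hs
  choose! cc dd hck hdk hcn hdn κf hκK heq using hS'
  choose! nidx hnidx using hcn
  -- ultrafilter
  have hne : (Filter.cofinite ⊓ 𝓟 S).NeBot := by
    rw [Filter.inf_principal_neBot_iff]
    intro T hT
    rw [Filter.mem_cofinite] at hT
    exact ((hS.diff hT).nonempty).mono fun x hx => ⟨Set.not_notMem.mp hx.2, hx.1⟩
  set U : Ultrafilter ℕ := Ultrafilter.of (Filter.cofinite ⊓ 𝓟 S) with hUdef
  have hUle : (U : Filter ℕ) ≤ Filter.cofinite ⊓ 𝓟 S := Ultrafilter.of_le _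
  have hUcof : (U : Filter ℕ) ≤ Filter.cofinite := hUle.trans inf_le_left
  have hUS : S ∈ U := hUle (Filter.mem_inf_of_right (Filter.mem_principal_self S))
  have hUtop : (U : Filter ℕ) ≤ atTop := by rw [← Nat.cofinite_eq_atTop]; exact hUcof
  -- κ limit
  have hκmem : K ∈ Ultrafilter.map κf U :=
    Ultrafilter.mem_map.2 (Filter.mem_of_superset hUS fun s hs => hκK s hs)
  obtain ⟨κ₀, hκ₀K, hκ₀⟩ :=
    hKc.ultrafilter_le_nhds (Ultrafilter.map κf U) (Filter.le_principal_iff.2 hκmem)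
  have hκlim : Tendsto κf U (𝓝 κ₀) := hκ₀
  -- key lemma
  have key : ∀ (f : ℕ → H) (l : Fin m), (∀ s ∈ S, ∃ n, f s = a l n) →
      ∃ x : H, Tendsto f U (𝓝 x) ∧ ∃ ε : ℤ, (ε = 0 ∨ ε = 1) ∧ x - ε • h l ∈ G := by
    intro f l hf
    choose! idx hidx using hf
    by_cases ht : Tendsto idx U atTop
    · refine ⟨h l, ?_, 1, Or.inr rfl, by simpa using G.zero_mem⟩
      exact ((halim l).comp ht).congr'
        (Filter.eventually_of_mem hUS fun s hs => (hidx s hs).symm)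
    · have hnot : ¬ (U : Filter ℕ).map idx ≤ Filter.cofinite := by
        rw [Nat.cofinite_eq_atTop]; exact ht
      simp only [Filter.le_def, not_forall] at hnot
      obtain ⟨T, hTcof, hTnot⟩ := hnot
      have hTc : Tᶜ ∈ Ultrafilter.map idx U := by
        rw [Ultrafilter.mem_map]
        have : idx ⁻¹' T ∉ U := hTnot
        simpa [Set.preimage_compl] using (Ultrafilter.compl_mem_iff_notMem).2 this
      obtain ⟨v, hv, hpure⟩ :=
        Ultrafilter.eq_pure_of_finite_mem (Filter.mem_cofinite.mp hTcof) hTc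
      have hconst : {s | idx s = v} ∈ U := by
        have h1 : ({v} : Set ℕ) ∈ Ultrafilter.map idx U := by
          rw [hpure]; exact Set.mem_singleton v
        rw [Ultrafilter.mem_map] at h1
        exact h1
      refine ⟨a l v, ?_, 0, Or.inl rfl, by simpa using haG l v⟩
      refine tendsto_const_nhds.congr' ?_
      filter_upwards [hUS, hconst] with s hs hsv
      rw [hidx s hs, hsv]
  have hx : ∀ l : Fin m, ∃ x : H, Tendsto (fun s => cc s l) U (𝓝 x) ∧
      ∃ ε : ℤ, (ε = 0 ∨ ε = 1) ∧ x - ε • h l ∈ G := by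
    intro l
    by_cases hlk : l = k
    · subst hlk
      refine ⟨a l j, ?_, 0, Or.inl rfl, by simpa using haG l j⟩
      exact tendsto_const_nhds.congr'
        (Filter.eventually_of_mem hUS fun s hs => (hck s hs).symm)
    · exact key _ l fun s hs => ⟨nidx s l, hnidx s hs l hlk⟩
  have hy : ∀ l : Fin m, ∃ y : H, Tendsto (fun s => dd s l) U (𝓝 y) ∧
      ∃ δ : ℤ, (δ = 0 ∨ δ = 1) ∧ y - δ • h l ∈ G := by
    intro l
    by_cases hlk : l = k
    · subst hlk
      refine ⟨h l, ?_, 1, Or.inr rfl, by simpa using G.zero_mem⟩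
      exact ((halim l).mono_left hUtop).congr'
        (Filter.eventually_of_mem hUS fun s hs => (hdk s hs).symm)
    · choose! pidx hpidx using hdn
      exact key _ l fun s hs => ⟨pidx s l, hpidx s hs l hlk⟩
  choose x hxlim ε hε hεG using hx
  choose y hylim δ hδ hδG using hy
  have hLHS : Tendsto (fun s => ∑ l, cc s l) U (𝓝 (∑ l, x l)) :=
    tendsto_finset_sum _ fun l _ => hxlim l
  have hRHS : Tendsto (fun s => κf s + ∑ l, dd s l) U (𝓝 (κ₀ + ∑ l, y l)) :=
    hκlim.add (tendsto_finset_sum _ fun l _ => hylim l)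
  have hmain : ∑ l, x l = κ₀ + ∑ l, y l :=
    tendsto_nhds_unique
      (hLHS.congr' (Filter.eventually_of_mem hUS fun s hs => heq s hs)) hRHS
  -- pin ε k, δ k
  have hεk : ε k = 0 := by
    rcases hε k with h0 | h1
    · exact h0
    · exfalso
      have hxk : x k = a k j :=
        tendsto_nhds_unique (hxlim k)
          (tendsto_const_nhds.congr'
            (Filter.eventually_of_mem hUS fun s hs => (hck s hs).symm))
      have hG := hεG k
      rw [h1, hxk, one_smul] at hG
      exact hh k (by simpa using G.sub_mem (haG k j) hG)
  have hδk : δ k = 1 := by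
    rcases hδ k with h0 | h1
    · exfalso
      have hyk : y k = h k :=
        tendsto_nhds_unique (hylim k)
          (((halim k).mono_left hUtop).congr'
            (Filter.eventually_of_mem hUS fun s hs => (hdk s hs).symm))
      have hG := hδG k
      rw [h0, hyk, zero_smul, sub_zero] at hG
      exact hh k hG
    · exact h1
  have hik := hind (fun l => ε l - δ l) ?_ ?_ k
  · rw [hεk, hδk] at hik; norm_num at hik
  · intro l
    have := hε l; have := hδ l; beta_reduce; omega
  · have e1 : ∑ l, (ε l - δ l) • h l =
        (∑ l, x l) - (∑ l, (x l - ε l • h l)) -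
          ((∑ l, y l) - (∑ l, (y l - δ l • h l))) := by
      simp only [sub_smul, Finset.sum_sub_distrib]
      abel
    rw [e1, hmain]
    have e2 : κ₀ + ∑ l, y l - ∑ l, (x l - ε l • h l) -
        (∑ l, y l - ∑ l, (y l - δ l • h l)) =
        κ₀ + ∑ l, (y l - δ l • h l) - ∑ l, (x l - ε l • h l) := by abel
    rw [e2]
    exact G.sub_mem (G.add_mem (hKG hκ₀K) (sum_mem fun l _ => hδG l))
      (sum_mem fun l _ => hεG l)
end
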